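/- Let 𝒜 be a noetherian abelian category and Z a weak stability function on 𝒜 such that the image of the generalized rank R = Im ∘ Z (over all objects of 𝒜) is a discrete subset of ℝ. Then every nonzero object E of 𝒜 admits a Harder–Narasimhan filtration: a finite chain of subobjects 0 = E₀ ⊊ E₁ ⊊ … ⊊ Eₙ = E such that each subquotient A_i = E_i/E_{i−1} is Z-semistable and μ(A₁) > μ(A₂) > … > μ(Aₙ). -/

import Mathlib

/-!
On the subobject lattice of `E`, the function `X ↦ Z(X)` is modular and its increments
`Z(Y) - Z(X)`, `X ≤ Y`, are values of `Z` on subquotients, hence lie in the upper half-plane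
closed along `(-∞, 0]`; by discreteness of the rank, a nonzero increment of rank has rank
at least some `ε > 0`.

For `S < ⊤`, call `A > S` a candidate if every `B > A` has `μ(B/S) < μ(A/S)` (e.g. `A = ⊤`).
Replacing a candidate `A` by a smaller one `Q` with `μ(Q/S) > μ(A/S)` lowers the rank by at
least `ε` (a rank-zero step can only raise the slope), so there is a candidate admitting no
such replacement. It is semistable over `S`: otherwise a maximal destabilizing `Q < A`, which
exists by noetherianity, is again a candidate, by the modular splitting
`Z(B) - Z(S) = (Z(A ⊓ B) - Z(S)) + (Z(A ⊔ B) - Z(A))`. This gives the first step of the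
filtration of `E/S`, and iterating from `S = 0` terminates by noetherianity. The slopes of
consecutive factors decrease by the seesaw property, and semistability of `A/S` in `𝒜`
follows because subobjects of `A/S` are pulled back to subobjects between `S` and `A`.
-/

open CategoryTheory CategoryTheory.Limits

namespace BridgelandNotes

variable {𝒜 : Type*} [Category 𝒜] [Abelian 𝒜]

/-- `Z` is additive on short exact sequences:
`Z(E) = Z(F) + Z(G)` whenever `0 → F → E → G → 0` is exact in `𝒜`. -/
def AdditiveOnSES (Z : 𝒜 → ℂ) : Prop :=
  ∀ S : ShortComplex 𝒜, S.ShortExact → Z S.X₂ = Z S.X₁ + Z S.X₃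

/-- `Z` is a stability function on the abelian category `𝒜`: it is additive on short
exact sequences, every nonzero object satisfies `Im Z(E) ≥ 0`, and `Im Z(E) = 0`
implies `Re Z(E) < 0`. -/
def IsStabilityFunction (Z : 𝒜 → ℂ) : Prop :=
  AdditiveOnSES Z ∧
    ∀ E : 𝒜, ¬ IsZero E → 0 ≤ (Z E).im ∧ ((Z E).im = 0 → (Z E).re < 0)

/-- The generalized rank `R(E) := Im Z(E)`. -/
def genR (Z : 𝒜 → ℂ) (E : 𝒜) : ℝ := (Z E).im

/-- The generalized degree `D(E) := -Re Z(E)`. -/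
def genD (Z : 𝒜 → ℂ) (E : 𝒜) : ℝ := -(Z E).re

/-- The slope inequality `μ(A) ≤ μ(B)`, encoded for nonzero objects by
cross-multiplication: `D(A)·R(B) ≤ D(B)·R(A)`. -/
def SlopeLE (Z : 𝒜 → ℂ) (A B : 𝒜) : Prop :=
  genD Z A * genR Z B ≤ genD Z B * genR Z A

/-- The strict slope inequality `μ(A) < μ(B)`, encoded for nonzero objects by
cross-multiplication: `D(A)·R(B) < D(B)·R(A)`. -/
def SlopeLT (Z : 𝒜 → ℂ) (A B : 𝒜) : Prop :=
  genD Z A * genR Z B < genD Z B * genR Z A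

/-- A nonzero object `E` is `Z`-semistable if `μ(F) ≤ μ(E)` for every nonzero proper
subobject `F` of `E`. -/
def IsSemistable (Z : 𝒜 → ℂ) (E : 𝒜) : Prop :=
  ¬ IsZero E ∧
    ∀ (F : 𝒜) (f : F ⟶ E), Mono f → ¬ IsZero F → ¬ IsIso f → SlopeLE Z F E

/-- The abelian category `𝒜` is noetherian: every ascending chain of subobjects of
any object stabilizes. -/
def NoetherianCategory (𝒜 : Type*) [Category 𝒜] [Abelian 𝒜] : Prop :=
  ∀ (E : 𝒜) (f : ℕ →o Subobject E), ∃ N : ℕ, ∀ n : ℕ, N ≤ n → f n = f N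

/-- The image of the generalized rank `R = Im ∘ Z` is a discrete subset of `ℝ`. -/
def HasDiscreteRank (Z : 𝒜 → ℂ) : Prop :=
  ∀ x ∈ Set.range (genR Z), ∃ ε > (0 : ℝ), ∀ y ∈ Set.range (genR Z), |y - x| < ε → y = x

/-- The subquotient `T/S` of two nested subobjects `S ≤ T` of an object of `𝒜`. -/
noncomputable def subquot {E : 𝒜} (S T : Subobject E) (h : S ≤ T) : 𝒜 :=
  cokernel (Subobject.ofLE S T h)

/-- `Z` is a weak stability function on the abelian category `𝒜`: it is additive on
short exact sequences, every nonzero object satisfies `Im Z(E) ≥ 0`, and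
`Im Z(E) = 0` implies `Re Z(E) ≤ 0`. -/
def IsWeakStabilityFunction (Z : 𝒜 → ℂ) : Prop :=
  AdditiveOnSES Z ∧
    ∀ E : 𝒜, ¬ IsZero E → 0 ≤ (Z E).im ∧ ((Z E).im = 0 → (Z E).re ≤ 0)

/-- The slope `μ(E) = D(E)/R(E) ∈ (−∞, +∞]`, with the convention `μ(E) = +∞`
whenever `R(E) = 0`. -/
noncomputable def slopeE (Z : 𝒜 → ℂ) (E : 𝒜) : EReal :=
  if genR Z E = 0 then ⊤ else ((genD Z E / genR Z E : ℝ) : EReal)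

/-- A nonzero object `E` is `Z`-semistable if `μ(F) ≤ μ(E)` for every nonzero proper
subobject `F` of `E`. -/
def IsSemistableWeak (Z : 𝒜 → ℂ) (E : 𝒜) : Prop :=
  ¬ IsZero E ∧
    ∀ (F : 𝒜) (f : F ⟶ E), Mono f → ¬ IsZero F → ¬ IsIso f → slopeE Z F ≤ slopeE Z E

/-- `slopeE Z E` unfolds to `slope (Z E)`. -/
noncomputable def slope (c : ℂ) : EReal :=
  if c.im = 0 then ⊤ else ((-c.re / c.im : ℝ) : EReal)

/-- The upper half-plane together with the ray `(-∞, 0]`: the values of a weak stability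
function, on zero objects included. -/
def InHalfPlane (c : ℂ) : Prop := 0 ≤ c.im ∧ (c.im = 0 → c.re ≤ 0)

lemma InHalfPlane.im_eq_zero_or_pos {c : ℂ} (h : InHalfPlane c) : c.im = 0 ∨ 0 < c.im :=
  h.1.eq_or_lt'

lemma slope_of_im_eq_zero {c : ℂ} (h : c.im = 0) : slope c = ⊤ := if_pos h

lemma slope_of_im_pos {c : ℂ} (h : 0 < c.im) : slope c = ((-c.re / c.im : ℝ) : EReal) :=
  if_neg h.ne'

lemma slope_le_slope_iff {a b : ℂ} (ha : 0 < a.im) (hb : 0 < b.im) :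
    slope a ≤ slope b ↔ -a.re * b.im ≤ -b.re * a.im := by
  rw [slope_of_im_pos ha, slope_of_im_pos hb, EReal.coe_le_coe_iff, div_le_div_iff₀ ha hb]

lemma slope_lt_slope_iff {a b : ℂ} (ha : 0 < a.im) (hb : 0 < b.im) :
    slope a < slope b ↔ -a.re * b.im < -b.re * a.im := by
  rw [slope_of_im_pos ha, slope_of_im_pos hb, EReal.coe_lt_coe_iff, div_lt_div_iff₀ ha hb]

lemma slope_lt_top_iff {c : ℂ} : slope c < ⊤ ↔ c.im ≠ 0 := by
  unfold slope; split_ifs with h <;> simp [h]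

lemma min_slope_le_slope_add {a b : ℂ} (ha : InHalfPlane a) (hb : InHalfPlane b) :
    min (slope a) (slope b) ≤ slope (a + b) := by
  rcases ha.im_eq_zero_or_pos with ha0 | ha0 <;> rcases hb.im_eq_zero_or_pos with hb0 | hb0
  · simp [slope_of_im_eq_zero, ha0, hb0]
  · have hab : 0 < (a + b).im := by simp [ha0, hb0]
    refine min_le_of_right_le ((slope_le_slope_iff hb0 hab).2 ?_)
    have := ha.2 ha0
    simp only [Complex.add_re, Complex.add_im, ha0] at *
    nlinarith
  · have hab : 0 < (a + b).im := by simp [ha0, hb0]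
    refine min_le_of_left_le ((slope_le_slope_iff ha0 hab).2 ?_)
    have := hb.2 hb0
    simp only [Complex.add_re, Complex.add_im, hb0] at *
    nlinarith
  · have hab : 0 < (a + b).im := by simp only [Complex.add_im]; positivity
    rcases le_total (slope a) (slope b) with h | h
    · refine min_le_of_left_le ((slope_le_slope_iff ha0 hab).2 ?_)
      rw [slope_le_slope_iff ha0 hb0] at h
      simp only [Complex.add_re, Complex.add_im]
      nlinarith
    · refine min_le_of_right_le ((slope_le_slope_iff hb0 hab).2 ?_)
      rw [slope_le_slope_iff hb0 ha0] at h
      simp only [Complex.add_re, Complex.add_im]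
      nlinarith

lemma slope_add_le_max_slope {a b : ℂ} (ha : InHalfPlane a) (hb : InHalfPlane b) :
    slope (a + b) ≤ max (slope a) (slope b) := by
  rcases ha.im_eq_zero_or_pos with ha0 | ha0
  · simp [slope_of_im_eq_zero ha0]
  rcases hb.im_eq_zero_or_pos with hb0 | hb0
  · simp [slope_of_im_eq_zero hb0]
  have hab : 0 < (a + b).im := by simp only [Complex.add_im]; positivity
  rcases le_total (slope a) (slope b) with h | h
  · refine le_max_of_le_right ((slope_le_slope_iff hab hb0).2 ?_)
    rw [slope_le_slope_iff ha0 hb0] at h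
    simp only [Complex.add_re, Complex.add_im]
    nlinarith
  · refine le_max_of_le_left ((slope_le_slope_iff hab ha0).2 ?_)
    rw [slope_le_slope_iff hb0 ha0] at h
    simp only [Complex.add_re, Complex.add_im]
    nlinarith

lemma slope_add_lt_of_slope_lt {a b : ℂ} (ha : InHalfPlane a) (hb : InHalfPlane b)
    (h : slope b < slope a) : slope (a + b) < slope a := by
  have hb0 : 0 < b.im := hb.1.lt_of_ne' (slope_lt_top_iff.1 (h.trans_le le_top))
  have hab : 0 < (a + b).im := by simp only [Complex.add_im]; linarith [ha.1]
  rcases ha.im_eq_zero_or_pos with ha0 | ha0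
  · rw [slope_of_im_eq_zero ha0]
    exact slope_lt_top_iff.2 hab.ne'
  rw [slope_lt_slope_iff hb0 ha0] at h
  rw [slope_lt_slope_iff hab ha0]
  simp only [Complex.add_re, Complex.add_im]
  nlinarith

lemma slope_lt_of_slope_add_lt {a b : ℂ} (ha : InHalfPlane a) (hb : InHalfPlane b)
    (h : slope (a + b) < slope a) : slope b < slope a := by
  by_contra! hab
  exact h.not_ge (min_eq_left hab ▸ min_slope_le_slope_add ha hb)

lemma slope_add_lt_of_le_of_lt {a b : ℂ} {t : EReal} (ha : InHalfPlane a) (hb : InHalfPlane b)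
    (hat : slope a ≤ t) (hbt : slope b < t) : slope (a + b) < t := by
  rcases le_or_gt (slope a) (slope b) with h | h
  · exact ((slope_add_le_max_slope ha hb).trans (max_le h le_rfl)).trans_lt hbt
  · exact (slope_add_lt_of_slope_lt ha hb h).trans_le hat

section Lattice

variable {L : Type*} [Lattice L]

/-- What the construction uses of `X ↦ Z(X)` on the subobject lattice of an object. -/
structure IsLatticeCharge (z : L → ℂ) : Prop where
  inHalfPlane : ∀ ⦃X Y : L⦄, X ≤ Y → InHalfPlane (z Y - z X)
  modular : ∀ A B : L, z A + z B = z (A ⊔ B) + z (A ⊓ B)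
  discrete : ∃ ε > 0, ∀ ⦃X Y : L⦄, X ≤ Y → (z Y - z X).im = 0 ∨ ε ≤ (z Y - z X).im

noncomputable def relSlope (z : L → ℂ) (X Y : L) : EReal := slope (z Y - z X)

variable {z : L → ℂ}

lemma relSlope_lt_of_relSlope_lt (hz : IsLatticeCharge z) {X Y W : L} (hXY : X ≤ Y)
    (hYW : Y ≤ W) (h : relSlope z X W < relSlope z X Y) : relSlope z Y W < relSlope z X Y := by
  have h' : slope ((z Y - z X) + (z W - z Y)) < slope (z Y - z X) := by
    rwa [sub_add_sub_cancel']
  exact slope_lt_of_slope_add_lt (hz.inHalfPlane hXY) (hz.inHalfPlane hYW) h'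

lemma wellFounded_relSlope_gt (hz : IsLatticeCharge z) (S : L) :
    WellFounded fun X A : L => S ≤ X ∧ X < A ∧ relSlope z S A < relSlope z S X := by
  obtain ⟨ε, hε, hgap⟩ := hz.discrete
  refine Subrelation.wf (r := InvImage (· < ·) fun X => ⌊(z X - z S).im / ε⌋₊) ?_
    (InvImage.wf _ wellFounded_lt)
  rintro X A ⟨hSX, hXA, hslope⟩
  have hstep : ε ≤ (z A - z X).im := by
    refine (hgap hXA.le).resolve_left fun h0 => hslope.not_ge ?_
    have := min_slope_le_slope_add (hz.inHalfPlane hSX) (hz.inHalfPlane hXA.le)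
    rwa [sub_add_sub_cancel', slope_of_im_eq_zero h0, min_top_right] at this
  have h0 : 0 ≤ (z X - z S).im / ε := div_nonneg (hz.inHalfPlane hSX).1 hε.le
  show ⌊_⌋₊ < ⌊_⌋₊
  calc ⌊(z X - z S).im / ε⌋₊ < ⌊(z X - z S).im / ε⌋₊ + 1 := Nat.lt_succ_self _
    _ = ⌊(z X - z S).im / ε + 1⌋₊ := (Nat.floor_add_one h0).symm
    _ ≤ ⌊(z A - z S).im / ε⌋₊ := by
      refine Nat.floor_le_floor ?_
      rw [div_add_one hε.ne', div_le_div_iff_of_pos_right hε]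
      simp only [Complex.sub_im] at hstep ⊢
      linarith

lemma relSlope_lt_of_maximal (hz : IsLatticeCharge z) {S A Q : L}
    (hA : ∀ B, A < B → relSlope z S B < relSlope z S A) (hSQ : S ≤ Q) (hQA : Q < A)
    (hQ : relSlope z S A < relSlope z S Q)
    (hmax : ∀ Q', Q < Q' → Q' < A → relSlope z S Q' ≤ relSlope z S A) :
    ∀ B, Q < B → relSlope z S B < relSlope z S Q := by
  have hbelow : ∀ Q', Q < Q' → Q' ≤ A → relSlope z S Q' < relSlope z S Q := fun Q' h1 h2 =>
    h2.eq_or_lt.elim (fun h => h ▸ hQ) fun h => (hmax Q' h1 h).trans_lt hQ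
  intro B hQB
  by_cases hBA : B ≤ A
  · exact hbelow B hQB hBA
  have hinf : relSlope z S (A ⊓ B) ≤ relSlope z S Q := by
    rcases (le_inf hQA.le hQB.le).eq_or_lt with h | h
    · rw [h]
    · exact (hbelow _ h inf_le_left).le
  have hsup : relSlope z A (A ⊔ B) < relSlope z S Q :=
    (relSlope_lt_of_relSlope_lt hz (hSQ.trans hQA.le) le_sup_left
      (hA _ (left_lt_sup.2 hBA))).trans (hbelow A hQA le_rfl)
  have hsplit : z B - z S = (z (A ⊓ B) - z S) + (z (A ⊔ B) - z A) := by
    linear_combination hz.modular A B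
  rw [relSlope, hsplit]
  exact slope_add_lt_of_le_of_lt (hz.inHalfPlane (hSQ.trans (le_inf hQA.le hQB.le)))
    (hz.inHalfPlane le_sup_left) hinf hsup

/-- `Y/X` is the maximal destabilizing subobject of `⊤/X`. -/
structure IsMaxDestabilizing (z : L → ℂ) (X Y : L) : Prop where
  lt : X < Y
  semistable : ∀ Q, X < Q → Q < Y → relSlope z X Q ≤ relSlope z X Y
  relSlope_lt : ∀ B, Y < B → relSlope z X B < relSlope z X Y

lemma IsMaxDestabilizing.relSlope_lt_of_lt (hz : IsLatticeCharge z) {X Y W : L}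
    (h : IsMaxDestabilizing z X Y) (hYW : Y < W) : relSlope z Y W < relSlope z X Y :=
  relSlope_lt_of_relSlope_lt hz h.lt.le hYW.le (h.relSlope_lt W hYW)

variable [OrderTop L] [WellFoundedGT L]

lemma exists_isMaxDestabilizing (hz : IsLatticeCharge z) {S : L} (hS : S < ⊤) :
    ∃ A, IsMaxDestabilizing z S A := by
  obtain ⟨A, ⟨hSA, hA⟩, hmin⟩ := (wellFounded_relSlope_gt hz S).has_min
    {A | S < A ∧ ∀ B, A < B → relSlope z S B < relSlope z S A}
    ⟨⊤, hS, fun B hB => absurd hB not_top_lt⟩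
  refine ⟨A, hSA, fun Q hSQ hQA => ?_, hA⟩
  by_contra! hQ
  obtain ⟨Q', ⟨hSQ', hQ'A, hQ'⟩, hmax⟩ := wellFounded_gt.has_min
    {Q | S < Q ∧ Q < A ∧ relSlope z S A < relSlope z S Q} ⟨Q, hSQ, hQA, hQ⟩
  have hQ'max : ∀ Q'', Q' < Q'' → Q'' < A → relSlope z S Q'' ≤ relSlope z S A :=
    fun Q'' h1 h2 => not_lt.1 fun h3 => hmax Q'' ⟨hSQ'.trans h1, h2, h3⟩ h1
  exact hmin Q' ⟨hSQ', relSlope_lt_of_maximal hz hA hSQ'.le hQ'A hQ' hQ'max⟩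
    ⟨hSQ'.le, hQ'A, hQ'⟩

lemma exists_isMaxDestabilizing_chain (hz : IsLatticeCharge z) (S : L) :
    ∃ (n : ℕ) (C : ℕ → L), C 0 = S ∧ C n = ⊤ ∧
      ∀ i < n, IsMaxDestabilizing z (C i) (C (i + 1)) := by
  induction S using WellFoundedGT.induction with
  | ind S ih =>
    rcases (le_top : S ≤ ⊤).eq_or_lt with rfl | hS
    · exact ⟨0, fun _ => ⊤, rfl, rfl, by simp⟩
    obtain ⟨A, hA⟩ := exists_isMaxDestabilizing hz hS
    obtain ⟨n, C, hC0, hCn, hC⟩ := ih A hA.lt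
    refine ⟨n + 1, fun | 0 => S | i + 1 => C i, rfl, hCn, ?_⟩
    rintro (_ | i) hi
    · simpa [hC0] using hA
    · exact hC i (by omega)

end Lattice

section Category

open ZeroObject

variable {Z : 𝒜 → ℂ}

namespace AdditiveOnSES

lemma eq_zero_of_isZero (hZ : AdditiveOnSES Z) {W : 𝒜} (hW : IsZero W) : Z W = 0 :=
  left_eq_add.mp (hZ (ShortComplex.mk (𝟙 W) (𝟙 W) (hW.eq_of_src _ _))
    ⟨ShortComplex.exact_of_isZero_X₂ _ hW⟩)

lemma apply_eq_add_of_isLimit (hZ : AdditiveOnSES Z) {A B C : 𝒜} (f : A ⟶ B) (g : B ⟶ C)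
    [Mono f] [Epi g] (w : f ≫ g = 0) (h : IsLimit (KernelFork.ofι f w)) :
    Z B = Z A + Z C :=
  hZ (ShortComplex.mk f g w) ⟨ShortComplex.exact_of_f_is_kernel _ h⟩

lemma eq_of_iso (hZ : AdditiveOnSES Z) {X Y : 𝒜} (e : X ≅ Y) : Z X = Z Y := by
  have hexact : (ShortComplex.mk e.hom (0 : Y ⟶ 0) comp_zero).ShortExact :=
    { exact := (ShortComplex.exact_iff_epi _ rfl).2 inferInstance
      epi_g := (isZero_zero 𝒜).epi _ }
  rw [hZ _ hexact, hZ.eq_zero_of_isZero (isZero_zero 𝒜), add_zero]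

lemma apply_subquot (hZ : AdditiveOnSES Z) {E : 𝒜} {S T : Subobject E} (h : S ≤ T) :
    Z T = Z S + Z (subquot S T h) :=
  hZ (ShortComplex.mk _ _ (cokernel.condition (Subobject.ofLE S T h)))
    ⟨ShortComplex.exact_of_g_is_cokernel _ (cokernelIsCokernel _)⟩

end AdditiveOnSES

lemma hom_sup_eq_zero {E W : 𝒜} {A B : Subobject E} (u : ((A ⊔ B : Subobject E) : 𝒜) ⟶ W)
    (hA : Subobject.ofLE A (A ⊔ B) le_sup_left ≫ u = 0)
    (hB : Subobject.ofLE B (A ⊔ B) le_sup_right ≫ u = 0) : u = 0 := by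
  have hle : A ⊔ B ≤ Subobject.mk (kernel.ι u ≫ (A ⊔ B).arrow) :=
    sup_le (Subobject.le_mk_of_comm (kernel.lift u _ hA) (by simp))
      (Subobject.le_mk_of_comm (kernel.lift u _ hB) (by simp))
  obtain ⟨s, hs⟩ : ∃ s, s ≫ kernel.ι u ≫ (A ⊔ B).arrow = (A ⊔ B).arrow :=
    (Subobject.mk_factors_iff _ _).1
    (Subobject.factors_of_le _ hle (Subobject.factors_self _))
  have hsection : s ≫ kernel.ι u = 𝟙 _ := by
    rw [← cancel_mono (A ⊔ B).arrow, Category.assoc, hs, Category.id_comp]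
  rw [← Category.id_comp u, ← hsection, Category.assoc, kernel.condition, comp_zero]

lemma shortExact_inf_sup {E : 𝒜} (A B : Subobject E) :
    (ShortComplex.mk (Subobject.ofLE (A ⊓ B) B inf_le_right)
      (Subobject.ofLE B (A ⊔ B) le_sup_right ≫
        cokernel.π (Subobject.ofLE A (A ⊔ B) le_sup_left))
      (by rw [← Category.assoc, Subobject.ofLE_comp_ofLE,
        ← Subobject.ofLE_comp_ofLE _ A _ inf_le_left le_sup_left, Category.assoc,
        cokernel.condition, comp_zero])).ShortExact := by
  refine .mk' (ShortComplex.exact_of_f_is_kernel _ ?_) inferInstance ?_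
  · refine KernelFork.IsLimit.ofι' _ _ fun {W} k hk => ?_
    have hlift := Abelian.monoLift_comp (Subobject.ofLE A (A ⊔ B) le_sup_left)
      (k ≫ Subobject.ofLE B (A ⊔ B) le_sup_right) (by simpa using hk)
    have hfac : (A ⊓ B).Factors (k ≫ B.arrow) := by
      refine (Subobject.inf_factors _).2 ⟨?_, Subobject.factors_comp_arrow k⟩
      rw [← Subobject.ofLE_arrow (le_sup_right : B ≤ A ⊔ B), ← Category.assoc, ← hlift,
        Category.assoc, Subobject.ofLE_arrow]
      exact Subobject.factors_comp_arrow _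
    refine ⟨Subobject.factorThru _ _ hfac, ?_⟩
    rw [← cancel_mono B.arrow, Category.assoc, Subobject.ofLE_arrow,
      Subobject.factorThru_arrow]
  · refine Preadditive.epi_of_cancel_zero _ fun g hg => ?_
    have hzero := hom_sup_eq_zero (cokernel.π _ ≫ g)
      (by rw [← Category.assoc, cokernel.condition, zero_comp]) (by simpa using hg)
    rwa [← cancel_epi (cokernel.π _), comp_zero]

lemma AdditiveOnSES.apply_add_apply_eq (hZ : AdditiveOnSES Z) {E : 𝒜} (A B : Subobject E) :
    Z A + Z B = Z (A ⊔ B : Subobject E) + Z (A ⊓ B : Subobject E) := by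
  rw [hZ _ (shortExact_inf_sup A B), hZ.apply_subquot (le_sup_left : A ≤ A ⊔ B), subquot]
  ring

lemma AdditiveOnSES.exists_subobject_of_mono_subquot (hZ : AdditiveOnSES Z) {E F : 𝒜}
    {S T : Subobject E} (h : S ≤ T) (f : F ⟶ subquot S T h) [Mono f] :
    ∃ Q : Subobject E, S ≤ Q ∧ Q ≤ T ∧ Z F = Z Q - Z S ∧
      (¬ IsZero F → S < Q) ∧ (¬ IsIso f → Q < T) := by
  set i := Subobject.ofLE S T h
  set π : (T : 𝒜) ⟶ subquot S T h := cokernel.π i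
  set ℓ : (S : 𝒜) ⟶ pullback f π :=
    pullback.lift 0 i (by rw [zero_comp]; exact (cokernel.condition i).symm)
  have hℓfst : ℓ ≫ pullback.fst f π = 0 := pullback.lift_fst _ _ _
  have hℓsnd : ℓ ≫ pullback.snd f π = i := pullback.lift_snd _ _ _
  have hℓm : ℓ ≫ pullback.snd f π ≫ T.arrow = S.arrow := by
    rw [← Category.assoc, hℓsnd, Subobject.ofLE_arrow]
  have : Mono ℓ := mono_of_mono_fac hℓsnd
  have : Epi π := inferInstanceAs (Epi (cokernel.π i))
  have hker : IsLimit (KernelFork.ofι ℓ hℓfst) := by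
    refine KernelFork.IsLimit.ofι' ℓ hℓfst fun {W} k hk => ?_
    have hkπ : (k ≫ pullback.snd f π) ≫ cokernel.π i = 0 := by
      change (k ≫ pullback.snd f π) ≫ π = 0
      rw [Category.assoc, ← pullback.condition, ← Category.assoc, hk, zero_comp]
    refine ⟨Abelian.monoLift i _ hkπ, pullback.hom_ext ?_ ?_⟩
    · rw [Category.assoc, hℓfst, comp_zero, hk]
    · rw [Category.assoc, hℓsnd, Abelian.monoLift_comp]
  refine ⟨Subobject.mk (pullback.snd f π ≫ T.arrow), Subobject.le_mk_of_comm ℓ hℓm,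
    Subobject.mk_le_of_comm _ rfl, ?_, fun hF => ?_, fun hf => ?_⟩
  · rw [hZ.eq_of_iso (Subobject.underlyingIso _), hZ.apply_eq_add_of_isLimit ℓ _ hℓfst hker]
    ring
  · have hS := (Subobject.mk_lt_mk_iff_of_comm ℓ hℓm).2 fun _ => hF ?_
    · rwa [Subobject.mk_arrow] at hS
    have hfst : pullback.fst f π = 0 := by rw [← cancel_epi ℓ, hℓfst, comp_zero]
    have hepi : Epi (pullback.fst f π) := inferInstance
    rw [hfst] at hepi
    exact IsZero.of_epi_zero (pullback f π) F
  · have hT := (Subobject.mk_lt_mk_iff_of_comm (i₂ := T.arrow) (pullback.snd f π) rfl).2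
      fun _ => hf ?_
    · rwa [Subobject.mk_arrow] at hT
    have : Epi (pullback.fst f π ≫ f) := by rw [pullback.condition]; exact epi_comp _ _
    have : Epi f := epi_of_epi (pullback.fst f π) f
    exact isIso_of_mono_of_epi f

lemma not_isZero_subquot {E : 𝒜} {S T : Subobject E} (h : S < T) :
    ¬ IsZero (subquot S T h.le) := by
  intro hzero
  have : Epi (Subobject.ofLE S T h.le) := Preadditive.epi_of_isZero_cokernel _ hzero
  have hlt := h
  rw [← Subobject.mk_arrow S, ← Subobject.mk_arrow T,
    Subobject.mk_lt_mk_iff_of_comm _ (Subobject.ofLE_arrow h.le)] at hlt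
  exact hlt (isIso_of_mono_of_epi _)

lemma AdditiveOnSES.slopeE_subquot (hZ : AdditiveOnSES Z) {E : 𝒜} {S T : Subobject E}
    (h : S ≤ T) : slopeE Z (subquot S T h) = relSlope (fun X : Subobject E => Z X) S T := by
  rw [relSlope, hZ.apply_subquot h, add_sub_cancel_left]
  rfl

lemma isSemistableWeak_subquot (hZ : AdditiveOnSES Z) {E : 𝒜} {S T : Subobject E} (h : S < T)
    (hss : ∀ Q, S < Q → Q < T →
      relSlope (fun X : Subobject E => Z X) S Q ≤ relSlope (fun X : Subobject E => Z X) S T) :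
    IsSemistableWeak Z (subquot S T h.le) := by
  refine ⟨not_isZero_subquot h, fun F f _ hF hf => ?_⟩
  obtain ⟨Q, -, -, hZF, hSQ, hQT⟩ := hZ.exists_subobject_of_mono_subquot h.le f
  rw [hZ.slopeE_subquot, show slopeE Z F = slope (Z F) from rfl, hZF]
  exact hss Q (hSQ hF) (hQT hf)

lemma IsWeakStabilityFunction.inHalfPlane (hZ : IsWeakStabilityFunction Z) (W : 𝒜) :
    InHalfPlane (Z W) := by
  by_cases hW : IsZero W
  · simp [InHalfPlane, hZ.1.eq_zero_of_isZero hW]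
  · exact hZ.2 W hW

lemma IsWeakStabilityFunction.isLatticeCharge (hZ : IsWeakStabilityFunction Z)
    (hDisc : HasDiscreteRank Z) (E : 𝒜) : IsLatticeCharge fun X : Subobject E => Z X := by
  have hsub : ∀ {X Y : Subobject E} (h : X ≤ Y), Z Y - Z X = Z (subquot X Y h) := fun h => by
    rw [hZ.1.apply_subquot h, add_sub_cancel_left]
  refine ⟨fun X Y h => hsub h ▸ hZ.inHalfPlane _, hZ.1.apply_add_apply_eq, ?_⟩
  obtain ⟨ε, hε, hgap⟩ :=
    hDisc 0 ⟨0, by simp [genR, hZ.1.eq_zero_of_isZero (isZero_zero 𝒜)]⟩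
  refine ⟨ε, hε, fun X Y h => or_iff_not_imp_right.2 fun hlt => ?_⟩
  rw [hsub h] at hlt ⊢
  refine hgap _ ⟨_, rfl⟩ ?_
  rw [sub_zero, abs_of_nonneg (hZ.inHalfPlane _).1]
  exact not_le.1 hlt

lemma NoetherianCategory.wellFoundedGT (hNoeth : NoetherianCategory 𝒜) (E : 𝒜) :
    WellFoundedGT (Subobject E) :=
  wellFoundedGT_iff_monotone_chain_condition.2 fun f =>
    (hNoeth E f).imp fun _ hN m hm => (hN m hm).symm

end Category

theorem hn_filtration_exists_weak_general (Z : 𝒜 → ℂ) (hZ : IsWeakStabilityFunction Z)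
    (hNoeth : NoetherianCategory 𝒜) (hDisc : HasDiscreteRank Z)
    (E : 𝒜) :
    ∃ (n : ℕ) (F : ℕ → Subobject E) (hF : ∀ i, i < n → F i < F (i + 1)),
      F 0 = ⊥ ∧ F n = ⊤ ∧
      (∀ i (h : i < n), IsSemistableWeak Z (subquot (F i) (F (i + 1)) (hF i h).le)) ∧
      ∀ i (h : i + 1 < n),
        slopeE Z (subquot (F (i + 1)) (F (i + 2)) (hF (i + 1) h).le) <
          slopeE Z (subquot (F i) (F (i + 1)) (hF i (Nat.lt_of_succ_lt h)).le) := by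
  have := hNoeth.wellFoundedGT E
  have hz := hZ.isLatticeCharge hDisc E
  obtain ⟨n, F, hF0, hFn, hF⟩ := exists_isMaxDestabilizing_chain hz ⊥
  refine ⟨n, F, fun i hi => (hF i hi).lt, hF0, hFn,
    fun i hi => isSemistableWeak_subquot hZ.1 (hF i hi).lt (hF i hi).semistable, fun i hi => ?_⟩
  rw [hZ.1.slopeE_subquot, hZ.1.slopeE_subquot]
  exact (hF i (by omega)).relSlope_lt_of_lt hz (hF (i + 1) hi).lt

/-- Existence of Harder–Narasimhan filtrations for a weak stability function: if `𝒜` is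
noetherian and the image of the generalized rank is discrete in `ℝ`, then every nonzero
object `E` admits a finite chain of subobjects `0 = E₀ ⊊ E₁ ⊊ … ⊊ Eₙ = E` whose
subquotients are `Z`-semistable of strictly decreasing slopes. -/
theorem hn_filtration_exists_weak (Z : 𝒜 → ℂ) (hZ : IsWeakStabilityFunction Z)
    (hNoeth : NoetherianCategory 𝒜) (hDisc : HasDiscreteRank Z)
    (E : 𝒜) (hE : ¬ IsZero E) :
    ∃ (n : ℕ) (F : ℕ → Subobject E) (hF : ∀ i, i < n → F i < F (i + 1)),
      F 0 = ⊥ ∧ F n = ⊤ ∧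
      (∀ i (h : i < n), IsSemistableWeak Z (subquot (F i) (F (i + 1)) (hF i h).le)) ∧
      ∀ i (h : i + 1 < n),
        slopeE Z (subquot (F (i + 1)) (F (i + 2)) (hF (i + 1) h).le) <
          slopeE Z (subquot (F i) (F (i + 1)) (hF i (Nat.lt_of_succ_lt h)).le) :=
  hn_filtration_exists_weak_general Z hZ hNoeth hDisc E

end BridgelandNotes
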